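/- Let π ∈ (0,1), χ ∈ (0,1), β, γ ∈ ℝ, δ ∈ (−1,1)\{0}. Define v₁ = β·π·(1−χ) + (πχ/(1−δ²))·((β+γδ) + (γ+βδ)π) and v₂ = (πχ/(1−δ²))·((γ+βδ) + (β+γδ)π), and let A = [[π, π²χ],[π²χ, πχ]]. Then the first coordinate of A⁻¹(v₁,v₂)ᵀ equals β(1−χ)/(1−π²χ) + (χ(1−π²))/((1−π²χ)(1−δ²))·(β+γδ), and the sum of the two coordinates of A⁻¹(v₁,v₂)ᵀ equals β(1−χ)/(1−π²χ) + [(β+γδ)χ(1−π²) + (γ+βδ)((1−χ)δπ + 1 − π²χ)] / ((1−π²χ)(1−δ²)). -/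
import Mathlib


open Matrix

/-- Asymptotic bias of OLS when outcome spillover is ignored (matrix algebra behind
Proposition 1): with `v₁, v₂` the almost-sure limits of the normalized OLS right-hand
side and `A = [[π, π²χ],[π²χ, πχ]]`, the first coordinate of `A⁻¹(v₁,v₂)ᵀ` equals
`β(1−χ)/(1−π²χ) + χ(1−π²)/((1−π²χ)(1−δ²))·(β+γδ)`, and the sum of the two coordinates
equals `β(1−χ)/(1−π²χ) + [(β+γδ)χ(1−π²) + (γ+βδ)((1−χ)δπ + 1 − π²χ)]/((1−π²χ)(1−δ²))`. -/
theorem stmt19 (π χ β γ δ : ℝ) (hπ : π ∈ Set.Ioo (0 : ℝ) 1)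
    (hχ : χ ∈ Set.Ioo (0 : ℝ) 1) (hδ : |δ| < 1) (hδ0 : δ ≠ 0)
    (v₁ v₂ : ℝ)
    (hv₁ : v₁ = β * π * (1 - χ) +
      (π * χ / (1 - δ ^ 2)) * ((β + γ * δ) + (γ + β * δ) * π))
    (hv₂ : v₂ = (π * χ / (1 - δ ^ 2)) * ((γ + β * δ) + (β + γ * δ) * π)) :
    ((!![π, π ^ 2 * χ; π ^ 2 * χ, π * χ])⁻¹ *ᵥ ![v₁, v₂]) 0 =
        β * (1 - χ) / (1 - π ^ 2 * χ) +
          χ * (1 - π ^ 2) / ((1 - π ^ 2 * χ) * (1 - δ ^ 2)) * (β + γ * δ) ∧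
      ((!![π, π ^ 2 * χ; π ^ 2 * χ, π * χ])⁻¹ *ᵥ ![v₁, v₂]) 0 +
          ((!![π, π ^ 2 * χ; π ^ 2 * χ, π * χ])⁻¹ *ᵥ ![v₁, v₂]) 1 =
        β * (1 - χ) / (1 - π ^ 2 * χ) +
          ((β + γ * δ) * χ * (1 - π ^ 2) +
              (γ + β * δ) * ((1 - χ) * δ * π + 1 - π ^ 2 * χ)) /
            ((1 - π ^ 2 * χ) * (1 - δ ^ 2)) := by
  obtain ⟨hπ0, hπ1⟩ := hπ
  obtain ⟨hχ0, hχ1⟩ := hχ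
  have hδ2 : (1 : ℝ) - δ ^ 2 ≠ 0 := by
    have := abs_lt.mp hδ
    nlinarith [sq_abs δ, abs_nonneg δ]
  have hπ2χ : (1 : ℝ) - π ^ 2 * χ ≠ 0 := by nlinarith
  have hdet : ((!![π, π ^ 2 * χ; π ^ 2 * χ, π * χ]) : Matrix (Fin 2) (Fin 2) ℝ).det
      = π ^ 2 * χ * (1 - π ^ 2 * χ) := by
    simp [Matrix.det_fin_two_of]; ring
  have hdet0 : ((!![π, π ^ 2 * χ; π ^ 2 * χ, π * χ]) : Matrix (Fin 2) (Fin 2) ℝ).det ≠ 0 := by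
    rw [hdet]
    have : π ^ 2 * χ > 0 := by positivity
    intro h
    rcases mul_eq_zero.mp h with h' | h'
    · exact this.ne' h'
    · exact hπ2χ h'
  have hinv : ((!![π, π ^ 2 * χ; π ^ 2 * χ, π * χ]) : Matrix (Fin 2) (Fin 2) ℝ)⁻¹
      = (π ^ 2 * χ * (1 - π ^ 2 * χ))⁻¹ •
        !![π * χ, -(π ^ 2 * χ); -(π ^ 2 * χ), π] := by
    rw [Matrix.inv_def, hdet, Matrix.adjugate_fin_two]
    congr 1
    simp [Ring.inverse_eq_inv]
  rw [hinv]
  have hπ0' : π ≠ 0 := hπ0.ne'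
  have hχ0' : χ ≠ 0 := hχ0.ne'
  constructor <;>
  · simp [Matrix.mulVec, dotProduct, Fin.sum_univ_two, hv₁, hv₂]
    field_simp
    ring
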